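/- arXiv:2405.15074 — 8 statements merged into one kernel-verified Lean document; each statement's English description precedes it below -/
import Mathlib

section
/- Let K : ℕ → ℝ satisfy K(t) > 0 for every t, K monotonically decreasing, and ‖K‖ := ∑_{t=0}^∞ K(t) < ∞. Suppose there exist ε > 0 and T ∈ ℕ such that ∑_{s=0}^{t} K(s)·K(t−s) ≤ 2(1+ε)·‖K‖·K(t) for all t ≥ T. Then for every natural number n ≥ 0 and every t ∈ ℕ, the (n+1)-fold convolution power satisfies K^{*(n+1)}(t) ≤ (K(0)/K(T) + 1)·(2‖K‖(1+ε))^{n}·K(t). -/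
/-!
Induction on `n`, with `ρ = 2‖K‖(1+ε)` and `C = K(0)/K(T) + 1`. For `t ≥ T` the hypothesis is
exactly what is needed to push the bound `K^{*(n+1)} ≤ C ρⁿ K` through one more convolution
with `K`. For `t < T` one uses instead the crude bound
`K^{*(n+2)}(t) ≤ K(0) ∑_{u ≤ t} K^{*(n+1)}(u) ≤ K(0) ‖K‖^{n+1}` (the mass of a convolution is
the product of the masses), together with `K(0) ≤ (K(0)/K(T)) K(t)` and `‖K‖ ≤ ρ`.
-/

noncomputable def discConv (K f : ℕ → ℝ) (t : ℕ) : ℝ :=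
  ∑ s ∈ Finset.range (t + 1), K s * f (t - s)

/-- Shifted by one: `convIter K n = K^{*(n+1)}`. -/
noncomputable def convIter (K : ℕ → ℝ) : ℕ → ℕ → ℝ
  | 0 => K
  | n + 1 => discConv K (convIter K n)

open Finset

section discConv

variable {K f g : ℕ → ℝ}

lemma discConv_nonneg (hK : ∀ t, 0 ≤ K t) (hf : ∀ t, 0 ≤ f t) (t : ℕ) : 0 ≤ discConv K f t :=
  sum_nonneg fun s _ => mul_nonneg (hK s) (hf _)

lemma discConv_le_const_mul (hK : ∀ t, 0 ≤ K t) {c : ℝ} (hfg : ∀ t, f t ≤ c * g t) (t : ℕ) :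
    discConv K f t ≤ c * discConv K g t := by
  rw [discConv, discConv, mul_sum]
  exact sum_le_sum fun s _ => (mul_le_mul_of_nonneg_left (hfg _) (hK s)).trans_eq (by ring)

lemma discConv_le_mul_sum_range (hK : Antitone K) (hf : ∀ t, 0 ≤ f t) (t : ℕ) :
    discConv K f t ≤ K 0 * ∑ u ∈ range (t + 1), f u := by
  calc discConv K f t ≤ ∑ s ∈ range (t + 1), K 0 * f (t - s) :=
        sum_le_sum fun s _ => mul_le_mul_of_nonneg_right (hK s.zero_le) (hf _)
    _ = K 0 * ∑ u ∈ range (t + 1), f u := by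
        rw [← mul_sum, ← sum_range_reflect f (t + 1), Nat.add_sub_cancel]

lemma sum_range_discConv_le (hK : ∀ t, 0 ≤ K t) (hf : ∀ t, 0 ≤ f t) (n : ℕ) :
    ∑ u ∈ range n, discConv K f u ≤ (∑ s ∈ range n, K s) * ∑ r ∈ range n, f r := by
  have hswap : ∑ u ∈ range n, discConv K f u
      = ∑ s ∈ range n, K s * ∑ r ∈ range (n - s), f r := by
    simp only [discConv, ← Nat.Ico_zero_eq_range]
    rw [← sum_Ico_Ico_comm]
    refine sum_congr rfl fun s _ => ?_
    rw [sum_Ico_eq_sum_range, Nat.Ico_zero_eq_range, mul_sum]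
    exact sum_congr rfl fun r _ => by rw [Nat.add_sub_cancel_left]
  rw [hswap, sum_mul]
  exact sum_le_sum fun s _ => mul_le_mul_of_nonneg_left
    (sum_le_sum_of_subset_of_nonneg (range_subset_range.mpr (n.sub_le s)) fun r _ _ => hf r)
    (hK s)

end discConv

section convIter

variable {K : ℕ → ℝ}

lemma convIter_nonneg (hK : ∀ t, 0 ≤ K t) (n t : ℕ) : 0 ≤ convIter K n t := by
  induction n generalizing t with
  | zero => exact hK t
  | succ n ih => exact discConv_nonneg hK ih t

lemma sum_range_convIter_le_tsum_pow (hK : ∀ t, 0 ≤ K t) (hKsum : Summable K) (n m : ℕ) :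
    ∑ u ∈ range m, convIter K n u ≤ (∑' u, K u) ^ (n + 1) := by
  have hpartial : ∑ s ∈ range m, K s ≤ ∑' u, K u :=
    hKsum.sum_le_tsum _ fun s _ => hK s
  induction n with
  | zero => simpa [convIter] using hpartial
  | succ n ih =>
    calc ∑ u ∈ range m, convIter K (n + 1) u
        ≤ (∑ s ∈ range m, K s) * ∑ r ∈ range m, convIter K n r :=
          sum_range_discConv_le hK (convIter_nonneg hK n) m
      _ ≤ (∑' u, K u) * (∑' u, K u) ^ (n + 1) :=
          mul_le_mul hpartial ih (sum_nonneg fun r _ => convIter_nonneg hK n r) (tsum_nonneg hK)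
      _ = (∑' u, K u) ^ (n + 2) := by ring

lemma convIter_succ_le (hK : ∀ t, 0 ≤ K t) (hKmono : Antitone K) (hKsum : Summable K)
    (n t : ℕ) : convIter K (n + 1) t ≤ K 0 * (∑' u, K u) ^ (n + 1) :=
  (discConv_le_mul_sum_range hKmono (convIter_nonneg hK n) t).trans
    (mul_le_mul_of_nonneg_left (sum_range_convIter_le_tsum_pow hK hKsum n _) (hK 0))

end convIter

/-- **Kesten's lemma** (discrete form). If `K` is positive, monotonically decreasing and
summable, and satisfies `∑_{s=0}^t K(s) K(t-s) ≤ 2(1+ε)‖K‖ K(t)` for all `t ≥ T`, then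
for every `n` and `t`, `K^{*(n+1)}(t) ≤ (K 0 / K T + 1) (2‖K‖(1+ε))^n K(t)`. -/
theorem kesten_lemma (K : ℕ → ℝ) (hKpos : ∀ t, 0 < K t) (hKmono : Antitone K)
    (hKsum : Summable K) (ε : ℝ) (hε : 0 < ε) (T : ℕ)
    (hkesten : ∀ t, T ≤ t →
      ∑ s ∈ Finset.range (t + 1), K s * K (t - s) ≤ 2 * (1 + ε) * (∑' u, K u) * K t) :
    ∀ (n : ℕ) (t : ℕ),
      convIter K n t ≤ (K 0 / K T + 1) * (2 * (∑' u, K u) * (1 + ε)) ^ n * K t := by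
  have hK : ∀ t, 0 ≤ K t := fun t => (hKpos t).le
  set S := ∑' u, K u
  set ρ := 2 * S * (1 + ε)
  have hS : 0 ≤ S := tsum_nonneg hK
  have hSρ : S ≤ ρ := by nlinarith
  have hC : 0 ≤ K 0 / K T := div_nonneg (hK 0) (hK T)
  have hKK : ∀ t, T ≤ t → discConv K K t ≤ ρ * K t := fun t ht =>
    (hkesten t ht).trans_eq (by ring)
  intro n
  induction n with
  | zero => exact fun t => le_mul_of_one_le_left (hK t) (by simpa using hC)
  | succ n ih =>
    intro t
    rcases le_or_gt T t with hTt | htT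
    · calc convIter K (n + 1) t ≤ (K 0 / K T + 1) * ρ ^ n * discConv K K t :=
            discConv_le_const_mul hK ih t
        _ ≤ (K 0 / K T + 1) * ρ ^ n * (ρ * K t) := by gcongr; exact hKK t hTt
        _ = (K 0 / K T + 1) * ρ ^ (n + 1) * K t := by ring
    · have hK0 : K 0 ≤ K 0 / K T * K t := by
        rw [div_mul_eq_mul_div, le_div_iff₀ (hKpos T)]
        exact mul_le_mul_of_nonneg_left (hKmono htT.le) (hK 0)
      calc convIter K (n + 1) t ≤ K 0 * S ^ (n + 1) := convIter_succ_le hK hKmono hKsum n t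
        _ ≤ K 0 / K T * K t * ρ ^ (n + 1) :=
            mul_le_mul hK0 (pow_le_pow_left₀ hS hSρ _) (by positivity) (mul_nonneg hC (hK t))
        _ ≤ (K 0 / K T + 1) * ρ ^ (n + 1) * K t := by
            nlinarith [hK t, pow_nonneg (hS.trans hSρ) (n + 1)]
end

section
/- Let γ > 0 and B > 0 be real numbers. Then |1 − 2γBx + γ²B(B+1)x²| < 1 holds for all x ∈ (0,1] if and only if γ(B+1) < 2. -/
/-- The one-step SGD contraction factor `1 − 2γBx + γ²B(B+1)x²` has absolute value
strictly less than `1` for all `x ∈ (0,1]` if and only if `γ(B+1) < 2`. -/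
theorem sgd_contraction_iff (γ B : ℝ) (hγ : 0 < γ) (hB : 0 < B) :
    (∀ x ∈ Set.Ioc (0:ℝ) 1, |1 - 2*γ*B*x + γ^2*B*(B+1)*x^2| < 1) ↔ γ*(B+1) < 2 := by
  constructor
  · intro h
    have h1 := h 1 ⟨one_pos, le_refl 1⟩
    rw [abs_lt] at h1
    nlinarith [h1.2, mul_pos hγ hB]
  · intro h x ⟨hx0, hx1⟩
    rw [abs_lt]
    constructor
    · nlinarith [sq_nonneg (1 - γ*B*x), sq_nonneg x, mul_pos hγ hB, sq_nonneg (γ*x)]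
    · have hlt : γ*(B+1)*x < 2 := by
        calc γ*(B+1)*x ≤ γ*(B+1)*1 := by
              apply mul_le_mul_of_nonneg_left hx1; positivity
          _ < 2 := by linarith
      nlinarith [mul_pos (mul_pos hγ hB) hx0]
end

section
/- Let F be a holomorphic function on the lower half-plane {m ∈ ℂ : Im m < 0}. Suppose there are constants c, δ > 0 and a point m₀ with Im m₀ < 0 and δ < |Im m₀| such that |F′(m)| ≥ c for all m with |m − m₀| ≤ δ (such m automatically lie in the lower half-plane). If |1 − F(m₀)| < c·δ, then there exists m with Im m < 0, |m − m₀| ≤ δ, and F(m) = 1. -/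
/-!
Instead of following the damped Newton flow, use a variational principle: for
`‖1 - F m₀‖ / δ < μ < c`, minimize `‖1 - F m‖ + μ ‖m - m₀‖` over the closed ball. Comparing with
`m₀` shows that the minimizer lies within `‖1 - F m₀‖ / μ < δ` of `m₀`, so in the open ball. There,
if `F m ≠ 1`, a short Newton step `t (1 - F m) / F' m` lowers the residual by about
`t ‖1 - F m‖` but raises the penalty by at most `μ t ‖1 - F m‖ / c`, contradicting minimality.
-/

open Filter Metric Topology

section NewtonDescent

variable {𝕜 : Type*} [RCLike 𝕜] {f : 𝕜 → 𝕜} {f' z w : 𝕜} {μ : ℝ}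

theorem HasDerivAt.frequently_norm_sub_add_mul_norm_lt (hf : HasDerivAt f f' z) (hμ : 0 ≤ μ)
    (hμf' : μ < ‖f'‖) (hz : f z ≠ w) :
    ∃ᶠ x in 𝓝 z, ‖w - f x‖ + μ * ‖x - z‖ < ‖w - f z‖ := by
  have hf'0 : f' ≠ 0 := norm_pos_iff.mp (hμ.trans_lt hμf')
  set e := w - f z
  set d := e / f'
  have he : 0 < ‖e‖ := norm_pos_iff.mpr (sub_ne_zero.mpr hz.symm)
  have hd : ‖d‖ = ‖e‖ / ‖f'‖ := norm_div e f'
  set η := (‖f'‖ - μ) / 2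
  have hstep : Tendsto (fun t : ℝ => (t : 𝕜) * d) (𝓝[>] 0) (𝓝 0) :=
    ((RCLike.continuous_ofReal (K := 𝕜)).mul_const d |>.tendsto' 0 0 (by simp)).mono_left
      nhdsWithin_le_nhds
  have hrem : ∀ᶠ t : ℝ in 𝓝[>] 0,
      ‖f (z + t * d) - f z - ((t : 𝕜) * d) • f'‖ ≤ η * ‖(t : 𝕜) * d‖ :=
    hstep.eventually ((hasDerivAt_iff_isLittleO_nhds_zero.mp hf).def (by simp only [η]; linarith))
  have hdesc : ∀ᶠ t : ℝ in 𝓝[>] 0,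
      ‖w - f (z + t * d)‖ + μ * ‖z + t * d - z‖ < ‖w - f z‖ := by
    filter_upwards [hrem, Ioo_mem_nhdsGT one_pos] with t ht ⟨ht0, ht1⟩
    have hnorm : ‖(t : 𝕜) * d‖ = t * ‖d‖ := by
      rw [norm_mul, RCLike.norm_ofReal, abs_of_pos ht0]
    have hsplit : w - f (z + t * d) =
        ((1 - t : ℝ) : 𝕜) * e - (f (z + t * d) - f z - ((t : 𝕜) * d) • f') := by
      simp only [smul_eq_mul, d, RCLike.ofReal_sub, RCLike.ofReal_one]
      field_simp
      ring
    have hgain : (η + μ) * ‖d‖ < ‖e‖ := by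
      have : η + μ < ‖f'‖ := by simp only [η]; linarith
      rw [hd, ← mul_div_assoc, div_lt_iff₀ (by linarith), mul_comm ‖e‖]
      exact mul_lt_mul_of_pos_right this he
    calc ‖w - f (z + t * d)‖ + μ * ‖z + t * d - z‖
        ≤ (1 - t) * ‖e‖ + η * (t * ‖d‖) + μ * (t * ‖d‖) := by
          rw [hsplit, add_sub_cancel_left, hnorm]
          gcongr
          refine (norm_sub_le _ _).trans (add_le_add (le_of_eq ?_) (hnorm ▸ ht))
          rw [norm_mul, RCLike.norm_ofReal, abs_of_pos (by linarith)]
      _ < ‖e‖ := by nlinarith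
  have hconv : Tendsto (fun t : ℝ => z + t * d) (𝓝[>] 0) (𝓝 z) := by
    simpa using tendsto_const_nhds.add hstep
  exact hconv.frequently hdesc.frequently

theorem HasDerivAt.not_isLocalMin_norm_sub_add_mul_norm (hf : HasDerivAt f f' z) (hμ : 0 ≤ μ)
    (hμf' : μ < ‖f'‖) (hz : f z ≠ w) (z₀ : 𝕜) :
    ¬ IsLocalMin (fun x => ‖w - f x‖ + μ * ‖x - z₀‖) z := fun hmin => by
  obtain ⟨x, hdesc, hx⟩ :=
    ((hf.frequently_norm_sub_add_mul_norm_lt hμ hμf' hz).and_eventually hmin).exists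
  have hpath : μ * ‖x - z₀‖ ≤ μ * ‖x - z‖ + μ * ‖z - z₀‖ := by
    rw [← mul_add]
    exact mul_le_mul_of_nonneg_left (norm_sub_le_norm_sub_add_norm_sub x z z₀) hμ
  simp only at hx
  linarith

end NewtonDescent

theorem exists_mem_ball_eq_of_le_norm_deriv {𝕜 : Type*} [RCLike 𝕜] {f : 𝕜 → 𝕜} {z₀ w : 𝕜}
    {c r : ℝ} (hr : 0 < r) (hf : ∀ z ∈ closedBall z₀ r, DifferentiableAt 𝕜 f z)
    (hf' : ∀ z ∈ closedBall z₀ r, c ≤ ‖deriv f z‖) (hres : ‖w - f z₀‖ < c * r) :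
    ∃ z ∈ ball z₀ r, f z = w := by
  obtain ⟨μ, hμr, hμc⟩ := exists_between ((div_lt_iff₀ hr).mpr hres)
  have hμ : 0 ≤ μ := (div_nonneg (norm_nonneg _) hr.le).trans hμr.le
  set ψ := fun x => ‖w - f x‖ + μ * ‖x - z₀‖
  have hψ : ContinuousOn ψ (closedBall z₀ r) := fun x hx =>
    ((continuousAt_const.sub (hf x hx).continuousAt).norm.add
      (continuousAt_const.mul (continuousAt_id.sub continuousAt_const).norm)).continuousWithinAt
  obtain ⟨z, hz, hmin⟩ := (isCompact_closedBall z₀ r).exists_isMinOn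
    (nonempty_closedBall.mpr hr.le) hψ
  have hzball : z ∈ ball z₀ r := by
    have hle : ψ z ≤ ψ z₀ := hmin (mem_closedBall_self hr.le)
    simp only [ψ, sub_self, norm_zero, mul_zero, add_zero] at hle
    rw [div_lt_iff₀ hr] at hμr
    rw [mem_ball, dist_eq_norm]
    exact lt_of_mul_lt_mul_left (by linarith [norm_nonneg (w - f z)]) hμ
  refine ⟨z, hzball, not_not.mp fun hne => ?_⟩
  exact (hf z hz).hasDerivAt.not_isLocalMin_norm_sub_add_mul_norm hμ
    (hμc.trans_le (hf' z hz)) hne z₀ (hmin.isLocalMin (closedBall_mem_nhds_of_mem hzball))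

theorem Complex.closedBall_subset_im_neg {m₀ : ℂ} {δ : ℝ} (hm₀ : m₀.im < 0)
    (hδ : δ < |m₀.im|) : closedBall m₀ δ ⊆ {m : ℂ | m.im < 0} := fun m hm => by
  have him : |(m - m₀).im| ≤ δ := (abs_im_le_norm _).trans (mem_closedBall_iff_norm.mp hm)
  rw [sub_im, abs_le] at him
  rw [abs_of_neg hm₀] at hδ
  show m.im < 0
  linarith

theorem newton_flow_stability_general (F : ℂ → ℂ)
    (hF : DifferentiableOn ℂ F {m : ℂ | m.im < 0})
    (c δ : ℝ) (hδ : 0 < δ) (m₀ : ℂ) (hm₀ : m₀.im < 0)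
    (hδ' : δ < |m₀.im|)
    (hderiv : ∀ m : ℂ, ‖m - m₀‖ ≤ δ → c ≤ ‖deriv F m‖)
    (hres : ‖1 - F m₀‖ < c * δ) :
    ∃ m : ℂ, m.im < 0 ∧ ‖m - m₀‖ ≤ δ ∧ F m = 1 := by
  have hball := Complex.closedBall_subset_im_neg hm₀ hδ'
  have hdiff : ∀ m ∈ closedBall m₀ δ, DifferentiableAt ℂ F m := fun m hm =>
    hF.differentiableAt ((isOpen_lt Complex.continuous_im continuous_const).mem_nhds (hball hm))
  obtain ⟨m, hm, hFm⟩ := exists_mem_ball_eq_of_le_norm_deriv hδ hdiff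
    (fun m hm => hderiv m (mem_closedBall_iff_norm.mp hm)) hres
  exact ⟨m, hball (ball_subset_closedBall hm), mem_closedBall_iff_norm.mp
    (ball_subset_closedBall hm), hFm⟩

/-- **Stability of approximate solutions of analytic fixed-point equations.** If `F` is
holomorphic on the lower half-plane, `|F′| ≥ c` on the closed ball of radius `δ` around an
approximate solution `m₀` (a ball contained in the lower half-plane since `δ < |Im m₀|`),
and the residual satisfies `|1 − F(m₀)| < cδ`, then an exact solution of `F(m) = 1` exists
in that ball. -/
theorem newton_flow_stability (F : ℂ → ℂ)
    (hF : DifferentiableOn ℂ F {m : ℂ | m.im < 0})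
    (c δ : ℝ) (hc : 0 < c) (hδ : 0 < δ) (m₀ : ℂ) (hm₀ : m₀.im < 0)
    (hδ' : δ < |m₀.im|)
    (hderiv : ∀ m : ℂ, ‖m - m₀‖ ≤ δ → c ≤ ‖deriv F m‖)
    (hres : ‖1 - F m₀‖ < c * δ) :
    ∃ m : ℂ, m.im < 0 ∧ ‖m - m₀‖ ≤ δ ∧ F m = 1 :=
  newton_flow_stability_general F hF c δ hδ m₀ hm₀ hδ' hderiv hres
end

section
/- Let X be a real random variable with 0 < X ≤ 1 almost surely and let ρ > 0. Suppose a < 0 is a real number satisfying ρ·𝔼[X·a/(X·a − 1)] = 1. Then there exist an open neighborhood U ⊆ ℂ of 0 and a holomorphic function q : U → ℂ with q(0) = a such that z·q(z) + ρ·𝔼[X·q(z)/(X·q(z) − 1)] = 1 for all z ∈ U. Consequently m(z) := z·q(z) is holomorphic on U, satisfies m(0) = 0 and m′(0) = a, and satisfies the self-consistent equation m(z) + ρ·𝔼[X·m(z)/(X·m(z) − z)] = 1 for all nonzero z ∈ U. -/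
/-!
On the left half-plane `Re w < 0` the denominators `X w - 1` stay at distance `≥ 1` from `0`, so
`G(w) = 𝔼[X w / (X w - 1)]` is holomorphic there, with `G'(w) = -𝔼[X / (X w - 1)²]`.
The equation `z q + ρ G(q) = 1` reads `z = h(q)` for `h(w) = (1 - ρ G(w)) / w`. The hypothesis
on `a` says `h(a) = 0`, and `h'(a) = ρ 𝔼[X / (X a - 1)²] / a ≠ 0`, so the holomorphic inverse
function theorem gives `q = h⁻¹` near `0`. Then `m(z) = z q(z)` has `m'(0) = q(0) = a`, and for
`z ≠ 0` the self-consistent equation is `z q + ρ G(q) = 1` with the fraction expanded by `z`.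
-/

open MeasureTheory Filter Topology

theorem MeasureTheory.integral_pos_of_ae_pos {Ω : Type*} [MeasurableSpace Ω] {μ : Measure Ω}
    [NeZero μ] {f : Ω → ℝ} (hf : ∀ᵐ ω ∂μ, 0 < f ω) (hfi : Integrable f μ) :
    0 < ∫ ω, f ω ∂μ := by
  rw [integral_pos_iff_support_of_nonneg_ae (hf.mono fun _ h => h.le) hfi, pos_iff_ne_zero]
  intro h
  obtain ⟨ω, hpos, hzero⟩ := (hf.and (measure_eq_zero_iff_ae_notMem.1 h)).exists
  exact hzero hpos.ne'

lemma one_le_norm_ofReal_mul_sub_one {x : ℝ} (hx : 0 ≤ x) {w : ℂ} (hw : w.re ≤ 0) :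
    1 ≤ ‖(x : ℂ) * w - 1‖ := by
  have hre : ((x : ℂ) * w - 1).re = x * w.re - 1 := by simp
  calc (1 : ℝ) ≤ -((x : ℂ) * w - 1).re := by rw [hre]; nlinarith
    _ ≤ ‖(x : ℂ) * w - 1‖ := (neg_le_abs _).trans (Complex.abs_re_le_norm _)

lemma hasDerivAt_mul_div_mul_sub_one {c w : ℂ} (hw : c * w - 1 ≠ 0) :
    HasDerivAt (fun v => c * v / (c * v - 1)) (-c / (c * w - 1) ^ 2) w := by
  have hcv : HasDerivAt (fun v => c * v) c w := by simpa using (hasDerivAt_id w).const_mul c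
  refine (hcv.div (hcv.sub_const 1) hw).congr_deriv ?_
  ring

theorem exists_differentiableOn_localInverse {f : ℂ → ℂ} {s : Set ℂ} {a : ℂ}
    (hf : DifferentiableOn ℂ f s) (hs : s ∈ 𝓝 a) (hf' : deriv f a ≠ 0) :
    ∃ U : Set ℂ, IsOpen U ∧ f a ∈ U ∧ ∃ g : ℂ → ℂ, DifferentiableOn ℂ g U ∧ g (f a) = a ∧
      Set.MapsTo g U s ∧ ∀ z ∈ U, f (g z) = z := by
  have hC : ContDiffAt ℂ 1 f a := (hf.analyticAt hs).contDiffAt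
  have hD := (hC.differentiableAt one_ne_zero).hasDerivAt.hasFDerivAt_equiv hf'
  have hg := hC.to_localInverse hD one_ne_zero
  have hga := hC.localInverse_apply_image hD one_ne_zero
  have hgs : ∀ᶠ z in 𝓝 (f a), hC.localInverse hD one_ne_zero z ∈ s :=
    hg.continuousAt.preimage_mem_nhds (by rwa [hga])
  obtain ⟨U, hU, hUo, haU⟩ := eventually_nhds_iff.1 <| (hg.eventually (by simp)).and <|
    hgs.and (hC.hasStrictFDerivAt' hD one_ne_zero).eventually_right_inverse
  exact ⟨U, hUo, haU, _,
    fun z hz => ((hU z hz).1.differentiableAt one_ne_zero).differentiableWithinAt,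
    hga, fun z hz => (hU z hz).2.1, fun z hz => (hU z hz).2.2⟩

lemma mul_div_mul_sub_eq {K : Type*} [Field K] (x q : K) {z : K} (hz : z ≠ 0) :
    x * (z * q) / (x * (z * q) - z) = x * q / (x * q - 1) := by
  rw [show x * (z * q) - z = z * (x * q - 1) by ring, show x * (z * q) = z * (x * q) by ring,
    mul_div_mul_left _ _ hz]

section HalfPlane

variable {Ω : Type*} [MeasurableSpace Ω] {μ : Measure Ω} {X : Ω → ℝ}

theorem hasDerivAt_integral_mul_div_mul_sub_one (hX0 : ∀ᵐ ω ∂μ, 0 ≤ X ω)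
    (hXi : Integrable X μ) {w : ℂ} (hw : w.re < 0) :
    HasDerivAt (fun v => ∫ ω, (X ω : ℂ) * v / ((X ω : ℂ) * v - 1) ∂μ)
      (∫ ω, -(X ω : ℂ) / ((X ω : ℂ) * w - 1) ^ 2 ∂μ) w := by
  have hball : Metric.ball w (-w.re) ⊆ {v : ℂ | v.re ≤ 0} := fun v hv => by
    have : (v - w).re < -w.re := (Complex.re_le_norm _).trans_lt (mem_ball_iff_norm.1 hv)
    rw [Complex.sub_re] at this
    exact (by linarith : v.re ≤ 0)
  have hXc : AEMeasurable (fun ω => (X ω : ℂ)) μ :=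
    Complex.measurable_ofReal.comp_aemeasurable hXi.aemeasurable
  have hF (v : ℂ) : AEStronglyMeasurable (fun ω => (X ω : ℂ) * v / ((X ω : ℂ) * v - 1)) μ :=
    ((hXc.mul_const v).div ((hXc.mul_const v).sub_const 1)).aestronglyMeasurable
  have hF' : AEStronglyMeasurable (fun ω => -(X ω : ℂ) / ((X ω : ℂ) * w - 1) ^ 2) μ :=
    (hXc.neg.div (((hXc.mul_const w).sub_const 1).pow_const 2)).aestronglyMeasurable
  have hFw : Integrable (fun ω => (X ω : ℂ) * w / ((X ω : ℂ) * w - 1)) μ := by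
    refine (hXi.norm.mul_const ‖w‖).mono' (hF w) ?_
    filter_upwards [hX0] with ω hω
    rw [norm_div, norm_mul, Complex.norm_real]
    exact div_le_self (by positivity) (one_le_norm_ofReal_mul_sub_one hω hw.le)
  refine (hasDerivAt_integral_of_dominated_loc_of_deriv_le
    (Metric.ball_mem_nhds w (neg_pos.2 hw)) (Eventually.of_forall hF) hFw hF'
    (F' := fun v ω => -(X ω : ℂ) / ((X ω : ℂ) * v - 1) ^ 2) (bound := fun ω => ‖X ω‖)
    ?_ hXi.norm ?_).2
  · filter_upwards [hX0] with ω hω v hv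
    rw [norm_div, norm_neg, norm_pow, Complex.norm_real]
    exact div_le_self (norm_nonneg _)
      (one_le_pow₀ (one_le_norm_ofReal_mul_sub_one hω (hball hv)))
  · filter_upwards [hX0] with ω hω v hv
    exact hasDerivAt_mul_div_mul_sub_one
      (norm_pos_iff.1 (one_pos.trans_le (one_le_norm_ofReal_mul_sub_one hω (hball hv))))

theorem integral_div_mul_sub_one_sq_pos [NeZero μ] (hX : ∀ᵐ ω ∂μ, 0 < X ω)
    (hXi : Integrable X μ) {a : ℝ} (ha : a ≤ 0) : 0 < ∫ ω, X ω / (X ω * a - 1) ^ 2 ∂μ := by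
  have hden (ω) (hω : 0 < X ω) : 1 ≤ (X ω * a - 1) ^ 2 := by
    nlinarith [mul_nonpos_of_nonneg_of_nonpos hω.le ha]
  refine integral_pos_of_ae_pos
    (hX.mono fun ω hω => div_pos hω (one_pos.trans_le (hden ω hω))) ?_
  have hXm := hXi.aemeasurable
  refine hXi.mono'
    (hXm.div (((hXm.mul_const a).sub_const 1).pow_const 2)).aestronglyMeasurable ?_
  filter_upwards [hX] with ω hω
  rw [Real.norm_of_nonneg (div_nonneg hω.le (sq_nonneg _))]
  exact div_le_self hω.le (hden ω hω)

theorem exists_differentiableOn_mul_add_integral_eq_one [NeZero μ] (hX : ∀ᵐ ω ∂μ, 0 < X ω)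
    (hXi : Integrable X μ) {ρ : ℂ} {a : ℝ} (ha : a < 0)
    (hfix : ρ * ∫ ω, (X ω : ℂ) * a / ((X ω : ℂ) * a - 1) ∂μ = 1) :
    ∃ U : Set ℂ, IsOpen U ∧ (0 : ℂ) ∈ U ∧ ∃ q : ℂ → ℂ, DifferentiableOn ℂ q U ∧ q 0 = a ∧
      ∀ z ∈ U, z * q z + ρ * ∫ ω, (X ω : ℂ) * q z / ((X ω : ℂ) * q z - 1) ∂μ = 1 := by
  set G : ℂ → ℂ := fun w => ∫ ω, (X ω : ℂ) * w / ((X ω : ℂ) * w - 1) ∂μ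
  set h : ℂ → ℂ := fun w => (1 - ρ * G w) / w
  have hG (w : ℂ) (hw : w.re < 0) :=
    hasDerivAt_integral_mul_div_mul_sub_one (hX.mono fun _ hω => hω.le) hXi hw
  have hne (w : ℂ) (hw : w.re < 0) : w ≠ 0 := by rintro rfl; simp at hw
  have hdiff : DifferentiableOn ℂ h {w | w.re < 0} := fun w hw =>
    ((((hG w hw).differentiableAt.const_mul ρ).const_sub 1).div differentiableAt_id
      (hne w hw)).differentiableWithinAt
  have haH : (a : ℂ).re < 0 := by simpa using ha
  obtain ⟨I, hI⟩ : ∃ I : ℝ, ∫ ω, X ω / (X ω * a - 1) ^ 2 ∂μ = I := ⟨_, rfl⟩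
  have hGa : ∫ ω, -(X ω : ℂ) / ((X ω : ℂ) * a - 1) ^ 2 ∂μ = -(I : ℂ) := by
    rw [← hI, ← integral_complex_ofReal, ← integral_neg]
    congr 1 with ω
    push_cast
    ring
  have hderiv : HasDerivAt h (ρ * I / a) a := by
    refine ((((hG a haH).const_mul ρ).const_sub 1).div (hasDerivAt_id' _)
      (hne a haH)).congr_deriv ?_
    rw [hGa, hfix, sub_self, zero_mul, sub_zero]
    field_simp [hne a haH]
  have hderiv_ne : deriv h a ≠ 0 := hderiv.deriv ▸ div_ne_zero
    (mul_ne_zero (left_ne_zero_of_mul_eq_one hfix)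
      (Complex.ofReal_ne_zero.2 (hI ▸ integral_div_mul_sub_one_sq_pos hX hXi ha.le).ne'))
    (Complex.ofReal_ne_zero.2 ha.ne)
  obtain ⟨U, hUo, hU0, q, hq, hqa, hqs, hhq⟩ := exists_differentiableOn_localInverse hdiff
    ((isOpen_lt Complex.continuous_re continuous_const).mem_nhds haH) hderiv_ne
  have ha0 : h a = 0 := by simp [h, G, hfix]
  rw [ha0] at hU0 hqa
  refine ⟨U, hUo, hU0, q, hq, hqa, fun z hz => ?_⟩
  have := hhq z hz
  simp only [h, div_eq_iff (hne _ (hqs hz))] at this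
  linear_combination -this

end HalfPlane

theorem deterministic_equivalent_near_zero_general
    {Ω : Type*} [MeasureSpace Ω] [IsProbabilityMeasure (volume : Measure Ω)]
    (X : Ω → ℝ) (hX : Measurable X) (hbdd : ∀ᵐ ω, X ω ∈ Set.Ioc 0 1)
    (ρ : ℝ) (a : ℝ) (ha : a < 0)
    (hfix : ρ * ∫ ω, X ω * a / (X ω * a - 1) = 1) :
    ∃ U : Set ℂ, IsOpen U ∧ (0:ℂ) ∈ U ∧ ∃ q : ℂ → ℂ, DifferentiableOn ℂ q U ∧
      q 0 = (a:ℂ) ∧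
      (∀ z ∈ U, z * q z + (ρ:ℂ) * ∫ ω, (X ω : ℂ) * q z / ((X ω : ℂ) * q z - 1) = 1) ∧
      DifferentiableOn ℂ (fun z => z * q z) U ∧
      (fun z => z * q z) 0 = 0 ∧
      deriv (fun z => z * q z) 0 = (a:ℂ) ∧
      ∀ z ∈ U, z ≠ 0 →
        z * q z + (ρ:ℂ) * ∫ ω, (X ω : ℂ) * (z * q z) / ((X ω : ℂ) * (z * q z) - z) = 1 := by
  have hXi : Integrable X := Integrable.of_bound hX.aestronglyMeasurable 1 <|
    hbdd.mono fun ω hω => by rw [Real.norm_of_nonneg hω.1.le]; exact hω.2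
  have hfixC : (ρ : ℂ) * ∫ ω, (X ω : ℂ) * a / ((X ω : ℂ) * a - 1) = 1 := by
    have h := congrArg Complex.ofReal hfix
    push_cast [← integral_complex_ofReal] at h
    exact h
  obtain ⟨U, hUo, hU0, q, hq, hqa, hsol⟩ :=
    exists_differentiableOn_mul_add_integral_eq_one (hbdd.mono fun _ hω => hω.1) hXi ha hfixC
  have hq0 : DifferentiableAt ℂ q 0 := hq.differentiableAt (hUo.mem_nhds hU0)
  refine ⟨U, hUo, hU0, q, hq, hqa, hsol, differentiableOn_id.mul hq, by simp, ?_,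
    fun z hz hz0 => ?_⟩
  · rw [deriv_fun_mul differentiableAt_fun_id hq0]
    simp [hqa]
  · simp_rw [mul_div_mul_sub_eq _ _ hz0]
    exact hsol z hz

/-- **Analyticity of the deterministic equivalent near `z = 0`.** If `a < 0` solves
`ρ 𝔼[Xa/(Xa − 1)] = 1`, then there is a holomorphic `q` on a neighborhood `U` of `0` with
`q(0) = a` solving `z q(z) + ρ 𝔼[X q(z)/(X q(z) − 1)] = 1`, so that `m(z) := z q(z)` is
holomorphic on `U`, vanishes at `0`, has `m′(0) = a`, and satisfies the self-consistent
equation `m(z) + ρ 𝔼[X m(z)/(X m(z) − z)] = 1` for nonzero `z ∈ U`. -/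
theorem deterministic_equivalent_near_zero
    {Ω : Type*} [MeasureSpace Ω] [IsProbabilityMeasure (volume : Measure Ω)]
    (X : Ω → ℝ) (hX : Measurable X) (hbdd : ∀ᵐ ω, X ω ∈ Set.Ioc 0 1)
    (ρ : ℝ) (hρ : 0 < ρ) (a : ℝ) (ha : a < 0)
    (hfix : ρ * ∫ ω, X ω * a / (X ω * a - 1) = 1) :
    ∃ U : Set ℂ, IsOpen U ∧ (0:ℂ) ∈ U ∧ ∃ q : ℂ → ℂ, DifferentiableOn ℂ q U ∧
      q 0 = (a:ℂ) ∧
      (∀ z ∈ U, z * q z + (ρ:ℂ) * ∫ ω, (X ω : ℂ) * q z / ((X ω : ℂ) * q z - 1) = 1) ∧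
      DifferentiableOn ℂ (fun z => z * q z) U ∧
      (fun z => z * q z) 0 = 0 ∧
      deriv (fun z => z * q z) 0 = (a:ℂ) ∧
      ∀ z ∈ U, z ≠ 0 →
        z * q z + (ρ:ℂ) * ∫ ω, (X ω : ℂ) * (z * q z) / ((X ω : ℂ) * (z * q z) - z) = 1 :=
  deterministic_equivalent_near_zero_general X hX hbdd ρ a ha hfix
end

section
/- There is an absolute constant C > 0 such that for all w, z ∈ ℂ with w ≠ 0, −z/w ∉ ℤ, and |Im(z/w)| ≥ |Re(z/w)|, and all integers N ≥ 1: |pv ∑_{n∈ℤ} 1/(wn + z) − ∑_{n=−N}^{N} 1/(wn + z)| ≤ C·|z|/(|w|²·N), where pv ∑_{n∈ℤ} 1/(wn+z) denotes the limit of the symmetric partial sums ∑_{n=−N}^{N} 1/(wn+z). -/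
/-!
Pairing the terms `n` and `-n` gives, with `x = z/w`,
`1/(wn+z) + 1/(-wn+z) = (2x/(x² - n²))/w`. Since `Re(x²) ≤ 0`, the point `x²` lies at distance
at least `n²` from `n²`, so the pair is bounded by `2|z|/(|w|² n²)`. The tail of the symmetric
partial sums beyond `N` is then at most `2|z|/|w|² · ∑_{n>N} 1/n² ≤ 2|z|/(|w|² N)`.
-/

open Finset Filter Topology

noncomputable def symmPartialSum {E : Type*} [AddCommMonoid E] (f : ℤ → E) (N : ℕ) : E :=
  ∑ n ∈ Icc (-(N : ℤ)) N, f n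

theorem symmPartialSum_succ {E : Type*} [AddCommMonoid E] (f : ℤ → E) (N : ℕ) :
    symmPartialSum f (N + 1) = symmPartialSum f N + (f (N + 1) + f (-(N + 1))) := by
  have h_right : ((N : ℤ) + 1) ∉ Icc (-(N : ℤ)) N := by simp
  have h_left : -(N : ℤ) - 1 ∉ insert ((N : ℤ) + 1) (Icc (-(N : ℤ)) N) := by
    simp only [mem_insert, mem_Icc]; omega
  rw [symmPartialSum, symmPartialSum, Nat.cast_succ, neg_add',
    ← insert_Icc_left_eq_Icc_sub_one (by omega), ← insert_Icc_right_eq_Icc_add_one (by omega),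
    sum_insert h_left, sum_insert h_right]
  abel

section TailBound

variable {E : Type*} [SeminormedAddCommGroup E] {f : ℤ → E} {K : ℝ}

theorem norm_symmPartialSum_sub_le (hf : ∀ m : ℕ, 1 ≤ m → ‖f m + f (-m)‖ ≤ K / m ^ 2)
    {N M : ℕ} (hN : 1 ≤ N) (hNM : N ≤ M) :
    ‖symmPartialSum f M - symmPartialSum f N‖ ≤ K * ((N : ℝ)⁻¹ - (M : ℝ)⁻¹) := by
  have hK : 0 ≤ K := by simpa using (norm_nonneg _).trans (hf 1 le_rfl)
  induction M, hNM using Nat.le_induction with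
  | base => simp
  | succ M hNM ih =>
    have hM : (0 : ℝ) < M := by exact_mod_cast hN.trans hNM
    -- `1/(M+1)^2 ≤ 1/(M(M+1)) = 1/M - 1/(M+1)` makes the bound telescope
    have h_tele : K / ((M : ℝ) + 1) ^ 2 ≤ K * ((M : ℝ)⁻¹ - ((M : ℝ) + 1)⁻¹) := by
      rw [div_eq_mul_inv]
      gcongr
      rw [inv_sub_inv hM.ne' (by positivity), add_sub_cancel_left, one_div, sq]
      gcongr
      linarith
    calc ‖symmPartialSum f (M + 1) - symmPartialSum f N‖
        = ‖(symmPartialSum f M - symmPartialSum f N) + (f (M + 1) + f (-(M + 1)))‖ := by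
          rw [symmPartialSum_succ]; abel_nf
      _ ≤ ‖symmPartialSum f M - symmPartialSum f N‖ + ‖f (M + 1) + f (-(M + 1))‖ :=
          norm_add_le _ _
      _ ≤ K * ((N : ℝ)⁻¹ - (M : ℝ)⁻¹) + K / ((M : ℝ) + 1) ^ 2 := by
          gcongr
          exact_mod_cast hf (M + 1) (by omega)
      _ ≤ K * ((N : ℝ)⁻¹ - ((M + 1 : ℕ) : ℝ)⁻¹) := by push_cast; linarith

theorem norm_sub_symmPartialSum_le (hf : ∀ m : ℕ, 1 ≤ m → ‖f m + f (-m)‖ ≤ K / m ^ 2)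
    {L : E} (hL : Tendsto (symmPartialSum f) atTop (𝓝 L)) {N : ℕ} (hN : 1 ≤ N) :
    ‖L - symmPartialSum f N‖ ≤ K / N := by
  have h_bound :
      Tendsto (fun M : ℕ => K * ((N : ℝ)⁻¹ - (M : ℝ)⁻¹)) atTop (𝓝 (K * (N : ℝ)⁻¹)) := by
    simpa using (tendsto_inv_atTop_nhds_zero_nat.const_sub (N : ℝ)⁻¹).const_mul K
  rw [div_eq_mul_inv]
  refine le_of_tendsto_of_tendsto (hL.sub_const _).norm h_bound ?_
  filter_upwards [eventually_ge_atTop N] with M hM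
  exact norm_symmPartialSum_sub_le hf hN hM

end TailBound

theorem le_norm_sub_ofReal_of_re_nonpos {u : ℂ} (hu : u.re ≤ 0) (t : ℝ) : t ≤ ‖u - t‖ :=
  calc t ≤ ((t : ℂ) - u).re := by
        rw [Complex.sub_re, Complex.ofReal_re]; linarith
    _ ≤ ‖(t : ℂ) - u‖ := Complex.re_le_norm _
    _ = ‖u - t‖ := norm_sub_rev _ _

theorem re_sq_nonpos_of_abs_re_le_abs_im {x : ℂ} (h : |x.re| ≤ |x.im|) : (x ^ 2).re ≤ 0 := by
  rw [sq, Complex.mul_re]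
  nlinarith [sq_le_sq.mpr h]

theorem norm_one_div_add_one_div_neg_le {x : ℂ} (hx : (x ^ 2).re ≤ 0) {m : ℝ} (hm : m ≠ 0) :
    ‖1 / (m + x) + 1 / (-m + x)‖ ≤ 2 * ‖x‖ / m ^ 2 := by
  have h_den : m ^ 2 ≤ ‖x ^ 2 - (m : ℂ) ^ 2‖ := by
    rw [← Complex.ofReal_pow]
    exact le_norm_sub_ofReal_of_re_nonpos hx (m ^ 2)
  have h_ne : x ^ 2 - (m : ℂ) ^ 2 ≠ 0 :=
    norm_pos_iff.mp ((by positivity : 0 < m ^ 2).trans_le h_den)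
  have h_plus : (m : ℂ) + x ≠ 0 := fun h => h_ne (by linear_combination (x - m) * h)
  have h_minus : -(m : ℂ) + x ≠ 0 := fun h => h_ne (by linear_combination (x + m) * h)
  have h_eq : 1 / (m + x) + 1 / (-m + x) = 2 * x / (x ^ 2 - (m : ℂ) ^ 2) := by
    field_simp
    ring
  rw [h_eq, norm_div, norm_mul, Complex.norm_two]
  gcongr

/-- **Truncation error for the principal-value lattice sum.** There is an absolute
constant `C > 0` such that whenever `w ≠ 0`, `−z/w` is not an integer,
`|Re(z/w)| ≤ |Im(z/w)|`, and `L` is the principal value of `∑_{n∈ℤ} 1/(wn+z)` (the limit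
of its symmetric partial sums), then for every `N ≥ 1` the truncation error satisfies
`|L − ∑_{n=−N}^{N} 1/(wn+z)| ≤ C |z| / (|w|² N)`. -/
theorem pv_lattice_sum_truncation :
    ∃ C : ℝ, 0 < C ∧ ∀ (w z : ℂ), w ≠ 0 → (∀ n : ℤ, -z / w ≠ (n : ℂ)) →
      |(z / w).re| ≤ |(z / w).im| → ∀ N : ℕ, 1 ≤ N → ∀ L : ℂ,
      Filter.Tendsto
        (fun M : ℕ => ∑ n ∈ Finset.Icc (-(M:ℤ)) (M:ℤ), 1 / (w * (n:ℂ) + z))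
        Filter.atTop (nhds L) →
      ‖L - ∑ n ∈ Finset.Icc (-(N:ℤ)) (N:ℤ), 1 / (w * (n:ℂ) + z)‖ ≤
        C * ‖z‖ / (‖w‖ ^ 2 * N) := by
  refine ⟨2, two_pos, fun w z hw _ hri N hN L hL => ?_⟩
  have h_term (n : ℤ) : 1 / (w * n + z) = w⁻¹ * (1 / (n + z / w)) := by
    rw [one_div, one_div, ← mul_inv, mul_add, mul_div_cancel₀ z hw]
  have h_pair (m : ℕ) (hm : 1 ≤ m) :
      ‖1 / (w * ((m : ℤ) : ℂ) + z) + 1 / (w * ((-m : ℤ) : ℂ) + z)‖ ≤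
        2 * ‖z‖ / ‖w‖ ^ 2 / m ^ 2 := by
    have h_m : (m : ℝ) ≠ 0 := by positivity
    rw [h_term, h_term, ← mul_add, norm_mul, norm_inv]
    calc ‖w‖⁻¹ * ‖1 / (((m : ℤ) : ℂ) + z / w) + 1 / (((-m : ℤ) : ℂ) + z / w)‖
        ≤ ‖w‖⁻¹ * (2 * ‖z / w‖ / (m : ℝ) ^ 2) := by
          gcongr
          exact_mod_cast norm_one_div_add_one_div_neg_le (re_sq_nonpos_of_abs_re_le_abs_im hri) h_m
      _ = 2 * ‖z‖ / ‖w‖ ^ 2 / m ^ 2 := by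
          rw [norm_div]; field_simp
  exact (norm_sub_symmPartialSum_le h_pair hL hN).trans_eq (div_div _ _ _)
end

section
/- Let α > 0 and β ∈ ℝ with 2α + 2β > 1, and let γ, B > 0. Define F_pp(r) = (1/(2α))·∫_0^1 u^{(2β−1)/(2α)}·exp(−2γB·r·u) du and g(r) = (2α)^{−1}·(2γB)^{1/(2α) − β/α − 1}·Γ(β/α − 1/(2α) + 1)·r^{−(1 + β/α) + 1/(2α)} for r > 0, where Γ is the Gamma function. Then: (i) for every ε > 0 there exists M > 0 such that |F_pp(r) − g(r)| ≤ ε·g(r) for all r with γB·r ≥ M; and (ii) for every M̃ > 0 there exist constants c, C > 0 depending only on α, β, M̃ such that c ≤ F_pp(r) ≤ C whenever 0 < γB·r ≤ M̃. -/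
open MeasureTheory intervalIntegral Set Filter

lemma aux_integrable (p s : ℝ) (hp : -1 < p) :
    IntervalIntegrable (fun u => u ^ p * Real.exp (-(s*u))) volume 0 1 :=
  (intervalIntegrable_rpow' hp).mul_continuousOn
    (Continuous.continuousOn (by continuity))

lemma aux_subst (p s : ℝ) (hs : 0 < s) :
    ∫ u in (0:ℝ)..1, u ^ p * Real.exp (-(s*u))
      = s ^ (-(p+1)) * ∫ t in (0:ℝ)..s, t ^ p * Real.exp (-t) := by
  have h1 : (s • ∫ u in (0:ℝ)..1, (fun t => t ^ p * Real.exp (-t)) (s * u))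
      = ∫ t in (s*0:ℝ)..s*1, t ^ p * Real.exp (-t) :=
    smul_integral_comp_mul_left (fun t => t ^ p * Real.exp (-t)) s
  have h2 : (∫ u in (0:ℝ)..1, (s*u) ^ p * Real.exp (-(s*u)))
      = s ^ p * ∫ u in (0:ℝ)..1, u ^ p * Real.exp (-(s*u)) := by
    rw [← intervalIntegral.integral_const_mul]
    apply intervalIntegral.integral_congr
    intro u hu
    rw [Set.uIcc_of_le (by norm_num : (0:ℝ) ≤ 1)] at hu
    simp only
    rw [Real.mul_rpow hs.le hu.1]
    ring
  simp only [smul_eq_mul, mul_zero, mul_one] at h1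
  rw [h2] at h1
  have hsp : s * s ^ p = s ^ (p+1) := by
    rw [Real.rpow_add_one hs.ne' p]; ring
  have h3 : s ^ (p+1) * ∫ u in (0:ℝ)..1, u ^ p * Real.exp (-(s*u))
      = ∫ t in (0:ℝ)..s, t ^ p * Real.exp (-t) := by
    rw [← hsp, mul_assoc]; exact h1
  rw [← h3, ← mul_assoc, ← Real.rpow_add hs, neg_add_cancel, Real.rpow_zero, one_mul]

lemma aux_tendsto (p : ℝ) (hp : -1 < p) :
    Tendsto (fun s : ℝ => ∫ t in (0:ℝ)..s, t ^ p * Real.exp (-t)) atTop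
      (nhds (Real.Gamma (p+1))) := by
  have hp1 : 0 < p + 1 := by linarith
  have h := intervalIntegral_tendsto_integral_Ioi 0
    (Real.GammaIntegral_convergent hp1) tendsto_id
  rw [Real.Gamma_eq_integral hp1]
  simp only [add_sub_cancel_right, id] at h ⊢
  exact h.congr fun s => intervalIntegral.integral_congr fun t _ => mul_comm _ _

lemma aux_le_gamma (p : ℝ) (hp : -1 < p) (s : ℝ) (hs : 0 < s) :
    ∫ t in (0:ℝ)..s, t ^ p * Real.exp (-t) ≤ Real.Gamma (p+1) := by
  have hp1 : 0 < p + 1 := by linarith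
  have hint := Real.GammaIntegral_convergent hp1
  rw [show p + 1 - 1 = p by ring] at hint
  rw [intervalIntegral.integral_of_le hs.le, Real.Gamma_eq_integral hp1]
  rw [show p + 1 - 1 = p by ring]
  have heq : ∀ t : ℝ, t ^ p * Real.exp (-t) = Real.exp (-t) * t ^ p := fun t => mul_comm _ _
  simp_rw [heq]
  apply setIntegral_mono_set hint
  · filter_upwards [ae_restrict_mem measurableSet_Ioi] with t ht
    have : (0:ℝ) < t := ht
    positivity
  · exact HasSubset.Subset.eventuallyLE Ioc_subset_Ioi_self

set_option maxHeartbeats 1000000 in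
/-- **Asymptotics of the pure-point forcing function.** For `2α + 2β > 1`,
`F_pp(r) = (1/(2α)) ∫₀¹ u^{(2β−1)/(2α)} e^{−2γBru} du` is asymptotically equal to
`g(r) = (2α)⁻¹ (2γB)^{1/(2α)−β/α−1} Γ(β/α − 1/(2α) + 1) r^{−(1+β/α)+1/(2α)}` as
`γBr → ∞`, and is bounded above and below by positive constants on `0 < γBr ≤ M̃`. -/
theorem Fpp_asymptotics (α β γ B : ℝ) (hα : 0 < α) (hαβ : 1 < 2*α + 2*β)
    (hγ : 0 < γ) (hB : 0 < B) :
    let Fpp : ℝ → ℝ := fun r =>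
      (1/(2*α)) * ∫ u in (0:ℝ)..1, u ^ ((2*β - 1)/(2*α)) * Real.exp (-(2*γ*B*r*u))
    let g : ℝ → ℝ := fun r =>
      (2*α)⁻¹ * (2*γ*B) ^ (1/(2*α) - β/α - 1) * Real.Gamma (β/α - 1/(2*α) + 1) *
        r ^ (-(1 + β/α) + 1/(2*α))
    (∀ ε > 0, ∃ M > 0, ∀ r : ℝ, 0 < r → M ≤ γ*B*r → |Fpp r - g r| ≤ ε * g r) ∧
    (∀ Mt > 0, ∃ c > 0, ∃ C > 0, ∀ r : ℝ, 0 < r → γ*B*r ≤ Mt →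
      c ≤ Fpp r ∧ Fpp r ≤ C) := by
  intro Fpp g
  set p : ℝ := (2*β - 1)/(2*α) with hp_def
  have hα2 : (0:ℝ) < 2*α := by linarith
  have hp : -1 < p := by
    rw [hp_def, lt_div_iff₀ hα2]; linarith
  have hp1 : (0:ℝ) < p + 1 := by linarith
  have hΓ : 0 < Real.Gamma (p+1) := Real.Gamma_pos_of_pos hp1
  have e1 : β/α - 1/(2*α) + 1 = p + 1 := by
    rw [hp_def]; field_simp
  have e2 : 1/(2*α) - β/α - 1 = -(p+1) := by
    rw [hp_def]; field_simp; ring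
  have e3 : -(1 + β/α) + 1/(2*α) = -(p+1) := by
    rw [hp_def]; field_simp; ring
  have hgB : (0:ℝ) < 2*γ*B := by positivity
  have hFpp_eq : ∀ r : ℝ, Fpp r
      = (1/(2*α)) * ∫ u in (0:ℝ)..1, u ^ p * Real.exp (-(2*γ*B*r*u)) := fun r => rfl
  have hg_eq : ∀ r : ℝ, g r
      = (2*α)⁻¹ * (2*γ*B) ^ (1/(2*α) - β/α - 1) * Real.Gamma (β/α - 1/(2*α) + 1) *
        r ^ (-(1 + β/α) + 1/(2*α)) := fun r => rfl
  clear_value p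
  clear_value Fpp g
  -- rewrite g
  have hg : ∀ r : ℝ, 0 < r →
      g r = (2*α)⁻¹ * (2*γ*B*r) ^ (-(p+1)) * Real.Gamma (p+1) := by
    intro r hr
    rw [hg_eq r]
    rw [e1, e2, e3, show (2*γ*B*r : ℝ) = (2*γ*B)*r by ring,
      Real.mul_rpow hgB.le hr.le]
    ring
  have hF : ∀ r : ℝ, 0 < r →
      Fpp r = (1/(2*α)) * ((2*γ*B*r) ^ (-(p+1)) *
        ∫ t in (0:ℝ)..(2*γ*B*r), t ^ p * Real.exp (-t)) := by
    intro r hr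
    have hs : (0:ℝ) < 2*γ*B*r := by positivity
    rw [hFpp_eq r, aux_subst p (2*γ*B*r) hs]
  constructor
  · -- asymptotic part
    intro ε hε
    have hlt : Real.Gamma (p+1) - ε * Real.Gamma (p+1) < Real.Gamma (p+1) := by nlinarith
    have hev := (aux_tendsto p hp).eventually (eventually_gt_nhds hlt)
    obtain ⟨M₀, hM₀⟩ := eventually_atTop.1 hev
    refine ⟨max M₀ 1, lt_of_lt_of_le zero_lt_one (le_max_right _ _), ?_⟩
    intro r hr hMr
    have hs : (0:ℝ) < 2*γ*B*r := by positivity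
    have hsM : M₀ ≤ 2*γ*B*r := by
      have h1 : M₀ ≤ max M₀ 1 := le_max_left _ _
      have h2 : (1:ℝ) ≤ max M₀ 1 := le_max_right _ _
      nlinarith
    have hI := hM₀ _ hsM
    have hIle := aux_le_gamma p hp _ hs
    set I : ℝ := ∫ t in (0:ℝ)..(2*γ*B*r), t ^ p * Real.exp (-t)
    set K : ℝ := (2*γ*B*r) ^ (-(p+1)) with hK_def
    have hK : 0 ≤ K := Real.rpow_nonneg hs.le _
    rw [hF r hr, hg r hr]
    have h2α : (0:ℝ) ≤ (2*α)⁻¹ := by positivity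
    have hdiff : (1/(2*α)) * (K * I) - (2*α)⁻¹ * K * Real.Gamma (p+1)
        = ((2*α)⁻¹ * K) * (I - Real.Gamma (p+1)) := by ring
    have hx1 : (0:ℝ) ≤ (2*α)⁻¹ * K * (Real.Gamma (p+1) - I) :=
      mul_nonneg (mul_nonneg h2α hK) (sub_nonneg.2 hIle)
    have hx2 : (0:ℝ) ≤ (2*α)⁻¹ * K * (ε * Real.Gamma (p+1) - (Real.Gamma (p+1) - I)) :=
      mul_nonneg (mul_nonneg h2α hK) (by linarith)
    have hnp : (2*α)⁻¹ * K * (I - Real.Gamma (p+1)) ≤ 0 := by nlinarith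
    rw [hdiff, abs_of_nonpos hnp]
    rw [hK_def] at hx2
    nlinarith [hx2]
  · -- bounded part
    intro Mt hMt
    have hpow : ∫ u in (0:ℝ)..1, u ^ p = 1/(p+1) := by
      rw [integral_rpow (Or.inl hp)]
      rw [Real.one_rpow, Real.zero_rpow hp1.ne']
      norm_num
    refine ⟨(1/(2*α)) * (Real.exp (-(2*Mt)) * (1/(p+1))), by positivity,
      (1/(2*α)) * (1/(p+1)), by positivity, ?_⟩
    intro r hr hrM
    have hs : (0:ℝ) < 2*γ*B*r := by positivity
    have hs2 : 2*γ*B*r ≤ 2*Mt := by nlinarith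
    have hFr : Fpp r = (1/(2*α)) * ∫ u in (0:ℝ)..1, u ^ p * Real.exp (-((2*γ*B*r)*u)) := by
      exact hFpp_eq r
    have h2α : (0:ℝ) < 1/(2*α) := by positivity
    constructor
    · -- lower bound
      have hmono : ∫ u in (0:ℝ)..1, Real.exp (-(2*Mt)) * u ^ p
          ≤ ∫ u in (0:ℝ)..1, u ^ p * Real.exp (-((2*γ*B*r)*u)) := by
        refine intervalIntegral.integral_mono_on (by norm_num)
          ((intervalIntegrable_rpow' hp).const_mul (Real.exp (-(2*Mt))))
          (aux_integrable p (2*γ*B*r) hp) fun u hu => ?_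
        have hup : (0:ℝ) ≤ u ^ p := Real.rpow_nonneg hu.1 _
        have hsu : (2*γ*B*r)*u ≤ 2*Mt := by nlinarith [hu.1, hu.2]
        have hexp : Real.exp (-(2*Mt)) ≤ Real.exp (-((2*γ*B*r)*u)) :=
          Real.exp_le_exp.2 (by linarith)
        nlinarith [Real.exp_pos (-(2*Mt))]
      rw [intervalIntegral.integral_const_mul, hpow] at hmono
      rw [hFr]
      exact mul_le_mul_of_nonneg_left hmono h2α.le
    · -- upper bound
      have hmono : ∫ u in (0:ℝ)..1, u ^ p * Real.exp (-((2*γ*B*r)*u))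
          ≤ ∫ u in (0:ℝ)..1, u ^ p := by
        refine intervalIntegral.integral_mono_on (by norm_num)
          (aux_integrable p (2*γ*B*r) hp) (intervalIntegrable_rpow' hp) fun u hu => ?_
        have hup : (0:ℝ) ≤ u ^ p := Real.rpow_nonneg hu.1 _
        have hexp : Real.exp (-((2*γ*B*r)*u)) ≤ 1 := by
          rw [Real.exp_le_one_iff]
          nlinarith [hu.1]
        nlinarith
      rw [hpow] at hmono
      rw [hFr]
      exact mul_le_mul_of_nonneg_left hmono h2α.le
end

section
/- Let α > 1/2, β > 1/2, γ > 0, B > 0, and let v be a positive integer; set c_β = ∑_{j=1}^{v} j^{−2β}. For an integer d ≥ 1 define F_ac(r) = (c_β/(2α))·d^{−1}·∫_{d^{−2α}}^{1} u^{−1/(2α)}·exp(−2γB·r·u) du and g(r) = c_β·(2γB)^{−1 + 1/(2α)}·(2α)^{−1}·Γ(1 − 1/(2α))·r^{−1 + 1/(2α)}·d^{−1} for r > 0. Then for every ε > 0 there exists M > 0, independent of d, such that for all integers d ≥ 1 and all r with M ≤ γB·r ≤ d^{2α}/M, one has |F_ac(r) − g(r)| ≤ ε·g(r). -/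
open MeasureTheory Set Filter

lemma fInt (a : ℝ) (ha : 0 < a) (ha1 : a < 1) :
    IntegrableOn (fun x => Real.exp (-x) * x ^ (-a)) (Ioi (0:ℝ)) := by
  have h := Real.GammaIntegral_convergent (show (0:ℝ) < 1 - a by linarith)
  simpa [show (1:ℝ) - a - 1 = -a by ring] using h

lemma tail_lower (a δ : ℝ) (ha : 0 < a) (ha1 : a < 1) (hδ : 0 < δ) :
    ∫ x in Ioc 0 δ, Real.exp (-x) * x ^ (-a) ≤ δ ^ (1 - a) / (1 - a) := by
  have h1 : IntegrableOn (fun x : ℝ => x ^ (-a)) (Ioc 0 δ) :=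
    (intervalIntegral.intervalIntegrable_rpow' (by linarith : (-1:ℝ) < -a)).1
  have h2 : IntegrableOn (fun x => Real.exp (-x) * x ^ (-a)) (Ioc 0 δ) :=
    (fInt a ha ha1).mono_set Ioc_subset_Ioi_self
  have h3 : ∫ x in Ioc 0 δ, Real.exp (-x) * x ^ (-a) ≤ ∫ x in Ioc 0 δ, x ^ (-a) := by
    refine setIntegral_mono_on h2 h1 measurableSet_Ioc fun x hx => ?_
    have : Real.exp (-x) ≤ 1 := Real.exp_le_one_iff.2 (by linarith [hx.1])
    nlinarith [Real.rpow_nonneg (le_of_lt hx.1) (-a)]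
  have h4 : ∫ x in Ioc 0 δ, x ^ (-a) = δ ^ (1 - a) / (1 - a) := by
    rw [← intervalIntegral.integral_of_le hδ.le,
      integral_rpow (Or.inl (by linarith : (-1:ℝ) < -a))]
    rw [Real.zero_rpow (by linarith : -a + 1 ≠ 0)]
    norm_num
    ring_nf
  linarith

lemma tail_upper (a s : ℝ) (ha : 0 < a) (ha1 : a < 1) (hs : 1 ≤ s) :
    ∫ x in Ioi s, Real.exp (-x) * x ^ (-a) ≤ Real.exp (-s) := by
  have h2 : IntegrableOn (fun x => Real.exp (-x) * x ^ (-a)) (Ioi s) :=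
    (fInt a ha ha1).mono_set (Ioi_subset_Ioi (by linarith))
  have h1 : IntegrableOn (fun x : ℝ => Real.exp (-x)) (Ioi s) := by
    simpa using exp_neg_integrableOn_Ioi s one_pos
  have h3 : ∫ x in Ioi s, Real.exp (-x) * x ^ (-a) ≤ ∫ x in Ioi s, Real.exp (-x) := by
    refine setIntegral_mono_on h2 h1 measurableSet_Ioi fun x hx => ?_
    have hx1 : (1:ℝ) ≤ x := le_trans hs (le_of_lt hx)
    have : x ^ (-a) ≤ 1 := Real.rpow_le_one_of_one_le_of_nonpos hx1 (by linarith)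
    nlinarith [Real.exp_pos (-x)]
  rw [integral_exp_neg_Ioi] at h3
  exact h3

lemma gamma_split (a c s : ℝ) (ha : 0 < a) (ha1 : a < 1) (hc : 0 < c) (hcs : c ≤ s) :
    Real.Gamma (1 - a) - ∫ t in c..s, Real.exp (-t) * t ^ (-a)
      = (∫ x in Ioc 0 c, Real.exp (-x) * x ^ (-a))
        + ∫ x in Ioi s, Real.exp (-x) * x ^ (-a) := by
  have hG : Real.Gamma (1 - a) = ∫ x in Ioi (0:ℝ), Real.exp (-x) * x ^ (-a) := by
    rw [Real.Gamma_eq_integral (by linarith : (0:ℝ) < 1 - a)]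
    simp [show (1:ℝ) - a - 1 = -a by ring]
  have hI := fInt a ha ha1
  have e1 : Ioc (0:ℝ) c ∪ Ioi c = Ioi 0 := Ioc_union_Ioi_eq_Ioi hc.le
  have e2 : Ioc c s ∪ Ioi s = Ioi c := Ioc_union_Ioi_eq_Ioi hcs
  have d1 : Disjoint (Ioc (0:ℝ) c) (Ioi c) := by
    simp [Set.disjoint_left]
  have d2 : Disjoint (Ioc c s) (Ioi s) := by
    simp [Set.disjoint_left]
  have i1 : IntegrableOn (fun x => Real.exp (-x) * x ^ (-a)) (Ioc 0 c) :=
    hI.mono_set Ioc_subset_Ioi_self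
  have i2 : IntegrableOn (fun x => Real.exp (-x) * x ^ (-a)) (Ioi c) :=
    hI.mono_set (Ioi_subset_Ioi hc.le)
  have i3 : IntegrableOn (fun x => Real.exp (-x) * x ^ (-a)) (Ioc c s) :=
    i2.mono_set Ioc_subset_Ioi_self
  have i4 : IntegrableOn (fun x => Real.exp (-x) * x ^ (-a)) (Ioi s) :=
    hI.mono_set (Ioi_subset_Ioi (by linarith))
  have s1 : ∫ x in Ioi (0:ℝ), Real.exp (-x) * x ^ (-a)
      = (∫ x in Ioc 0 c, Real.exp (-x) * x ^ (-a)) + ∫ x in Ioi c, Real.exp (-x) * x ^ (-a) := by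
    rw [← e1, setIntegral_union d1 measurableSet_Ioi i1 i2]
  have s2 : ∫ x in Ioi c, Real.exp (-x) * x ^ (-a)
      = (∫ x in Ioc c s, Real.exp (-x) * x ^ (-a)) + ∫ x in Ioi s, Real.exp (-x) * x ^ (-a) := by
    rw [← e2, setIntegral_union d2 measurableSet_Ioi i3 i4]
  rw [hG, intervalIntegral.integral_of_le hcs, s1, s2]
  ring

lemma subst (a s c : ℝ) (ha : 0 < a) (hs : 0 < s) (hc : 0 < c) :
    ∫ u in c..1, u ^ (-a) * Real.exp (-(s*u))
      = s ^ (a-1) * ∫ t in (s*c)..(s*1), Real.exp (-t) * t ^ (-a) := by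
  have key : ∫ u in c..1, u ^ (-a) * Real.exp (-(s*u))
      = ∫ u in c..1, s ^ a * (Real.exp (-(s*u)) * (s*u) ^ (-a)) := by
    refine intervalIntegral.integral_congr fun u hu => ?_
    have hu0 : 0 < u := lt_of_lt_of_le (lt_min hc one_pos) hu.1
    rw [Real.mul_rpow hs.le hu0.le]
    have h1 : s ^ a * s ^ (-a) = 1 := by
      rw [← Real.rpow_add hs]; simp
    linear_combination (-(Real.exp (-(s*u)) * u ^ (-a))) * h1
  rw [key, intervalIntegral.integral_const_mul,
    intervalIntegral.integral_comp_mul_left (fun t => Real.exp (-t) * t ^ (-a)) hs.ne',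
    smul_eq_mul]
  have h2 : s ^ (a - 1) = s ^ a * s⁻¹ := by
    rw [Real.rpow_sub hs, Real.rpow_one, div_eq_mul_inv]
  rw [h2]; ring

lemma key_bound (a c s : ℝ) (ha : 0 < a) (ha1 : a < 1) (hc : 0 < c) (hcs : c ≤ s)
    (hs1 : 1 ≤ s) :
    |(∫ t in c..s, Real.exp (-t) * t ^ (-a)) - Real.Gamma (1 - a)|
      ≤ c ^ (1 - a) / (1 - a) + Real.exp (-s) := by
  rw [abs_sub_comm]
  have hsplit := gamma_split a c s ha ha1 hc hcs
  have hT1 : 0 ≤ ∫ x in Ioc 0 c, Real.exp (-x) * x ^ (-a) :=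
    setIntegral_nonneg measurableSet_Ioc fun x hx =>
      mul_nonneg (Real.exp_pos _).le (Real.rpow_nonneg hx.1.le _)
  have hT2 : 0 ≤ ∫ x in Ioi s, Real.exp (-x) * x ^ (-a) :=
    setIntegral_nonneg measurableSet_Ioi fun x hx =>
      mul_nonneg (Real.exp_pos _).le (Real.rpow_nonneg (by linarith [hx.out] : (0:ℝ) ≤ x) _)
  have b1 := tail_lower a c ha ha1 hc
  have b2 := tail_upper a s ha ha1 hs1
  rw [abs_of_nonneg (by linarith)]
  linarith

set_option maxHeartbeats 1000000 in
/-- **Asymptotics of the absolutely-continuous forcing function.** For `α > 1/2`,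
`β > 1/2`, `F_ac(r) = (c_β/(2α)) d⁻¹ ∫_{d^{−2α}}^{1} u^{−1/(2α)} e^{−2γBru} du` is
asymptotically equal to
`g(r) = c_β (2γB)^{−1+1/(2α)} (2α)⁻¹ Γ(1 − 1/(2α)) r^{−1+1/(2α)} d⁻¹`, uniformly in `d`,
in the window `M ≤ γBr ≤ d^{2α}/M`. -/
theorem Fac_asymptotics (α β γ B : ℝ) (hα : 1/2 < α) (hβ : 1/2 < β)
    (hγ : 0 < γ) (hB : 0 < B) (v : ℕ) (hv : 0 < v) :
    let cβ : ℝ := ∑ j ∈ Finset.Icc 1 v, (j:ℝ) ^ (-(2*β))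
    let Fac : ℕ → ℝ → ℝ := fun d r =>
      (cβ/(2*α)) * (d:ℝ)⁻¹ *
        ∫ u in ((d:ℝ) ^ (-(2*α)))..1, u ^ (-(1/(2*α))) * Real.exp (-(2*γ*B*r*u))
    let g : ℕ → ℝ → ℝ := fun d r =>
      cβ * (2*γ*B) ^ (-1 + 1/(2*α)) * (2*α)⁻¹ * Real.Gamma (1 - 1/(2*α)) *
        r ^ (-1 + 1/(2*α)) * (d:ℝ)⁻¹
    ∀ ε > 0, ∃ M > 0, ∀ d : ℕ, 1 ≤ d → ∀ r : ℝ,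
      M ≤ γ*B*r → γ*B*r ≤ (d:ℝ) ^ (2*α) / M → |Fac d r - g d r| ≤ ε * g d r := by
  intro cβ Fac g
  have hcβ : 0 ≤ cβ := Finset.sum_nonneg fun j _ => Real.rpow_nonneg (Nat.cast_nonneg j) _
  simp only [Fac, g]
  intro ε hε
  set a : ℝ := 1/(2*α) with ha_def
  have hα0 : 0 < α := by linarith
  have ha : 0 < a := by positivity
  have ha1 : a < 1 := by
    rw [ha_def, div_lt_one (by linarith)]; linarith
  set G : ℝ := Real.Gamma (1 - a) with hG_def
  have hG : 0 < G := by
    rw [hG_def]; exact Real.Gamma_pos_of_pos (by linarith)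
  set K : ℝ := (1 - a) * ε * G / 2 with hK_def
  have hK : 0 < K := by
    rw [hK_def]; have : 0 < 1 - a := by linarith
    positivity
  set Q : ℝ := K ^ (1/(1-a)) with hQ_def
  have hQ : 0 < Q := Real.rpow_pos_of_pos hK _
  refine ⟨max 1 (max (2/Q) (-Real.log (ε*G/2)/2)), by positivity, ?_⟩
  set M : ℝ := max 1 (max (2/Q) (-Real.log (ε*G/2)/2)) with hM_def
  have hM1 : 1 ≤ M := le_max_left _ _
  have hM0 : 0 < M := by linarith
  intro d hd r hMr hrM
  have hd1 : (1:ℝ) ≤ (d:ℝ) := by exact_mod_cast hd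
  have hd0 : (0:ℝ) < (d:ℝ) := by linarith
  have hr : 0 < r := by nlinarith [mul_pos hγ hB]
  set s : ℝ := 2*γ*B*r with hs_def
  have hs : 0 < s := by rw [hs_def]; positivity
  have hs2M : 2*M ≤ s := by rw [hs_def]; nlinarith
  have hs1 : 1 ≤ s := by linarith
  set c : ℝ := (d:ℝ) ^ (-(2*α)) with hc_def
  have hc : 0 < c := Real.rpow_pos_of_pos hd0 _
  have hc1 : c ≤ 1 := Real.rpow_le_one_of_one_le_of_nonpos hd1 (by linarith)
  have hP : (d:ℝ) ^ (2*α) * c = 1 := by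
    rw [hc_def, ← Real.rpow_add hd0]; simp
  have hscM : s * c ≤ 2/M := by
    have h1 : γ*B*r*M ≤ (d:ℝ) ^ (2*α) := (le_div_iff₀ hM0).mp hrM
    have h2 : s*c*M ≤ 2 := by
      rw [hs_def]
      nlinarith [mul_le_mul_of_nonneg_right h1 hc.le]
    exact (le_div_iff₀ hM0).2 h2
  -- the substitution
  have hsub := subst a s c ha hs hc
  rw [mul_one] at hsub
  set I : ℝ := ∫ t in (s*c)..s, Real.exp (-t) * t ^ (-a) with hI_def
  -- the key bound
  have hb := key_bound a (s*c) s ha ha1 (by positivity) (by nlinarith) hs1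
  rw [← hG_def, ← hI_def] at hb
  -- bound the two error terms
  have h3 : (s*c) ^ (1-a) ≤ (2/M) ^ (1-a) :=
    Real.rpow_le_rpow (by positivity) hscM (by linarith)
  have hMQ : 2/Q ≤ M := le_trans (le_max_left _ _) (le_max_right _ _)
  have h2M : 2/M ≤ Q := by
    rw [div_le_iff₀ hM0]
    rw [div_le_iff₀ hQ] at hMQ
    nlinarith
  have h4 : (2/M) ^ (1-a) ≤ K := by
    have := Real.rpow_le_rpow (by positivity) h2M (by linarith : (0:ℝ) ≤ 1-a)
    rwa [hQ_def, one_div, Real.rpow_inv_rpow hK.le (by linarith : (1:ℝ)-a ≠ 0)] at this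
  have h5 : (s*c) ^ (1-a) / (1-a) ≤ ε * G / 2 := by
    rw [div_le_iff₀ (by linarith : (0:ℝ) < 1-a)]
    have : ε * G / 2 * (1-a) = K := by rw [hK_def]; ring
    rw [this]; linarith
  have hMl : -Real.log (ε*G/2)/2 ≤ M :=
    le_trans (le_max_right _ _) (le_max_right _ _)
  have h6 : Real.exp (-s) ≤ ε * G / 2 := by
    have h7 : -s ≤ Real.log (ε*G/2) := by linarith
    calc Real.exp (-s) ≤ Real.exp (Real.log (ε*G/2)) := Real.exp_le_exp.2 h7
      _ = ε*G/2 := Real.exp_log (by positivity)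
  have hIG : |I - G| ≤ ε * G := by linarith
  -- assemble
  rw [hsub]
  have hexp : (-1:ℝ) + a = a - 1 := by ring
  have hmul : (2*γ*B) ^ ((-1:ℝ)+a) * r ^ ((-1:ℝ)+a) = s ^ ((-1:ℝ)+a) := by
    rw [hs_def, ← Real.mul_rpow (by positivity) hr.le]
  have hCoef : 0 ≤ cβ/(2*α) * (d:ℝ)⁻¹ * s ^ (a-1) := by positivity
  have hY : cβ * (2*γ*B) ^ ((-1:ℝ)+a) * (2*α)⁻¹ * G * r ^ ((-1:ℝ)+a) * (d:ℝ)⁻¹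
      = (cβ/(2*α) * (d:ℝ)⁻¹ * s ^ (a-1)) * G := by
    rw [← hexp]
    linear_combination (cβ * (2*α)⁻¹ * G * (d:ℝ)⁻¹) * hmul
  rw [hY]
  rw [show cβ/(2*α) * (d:ℝ)⁻¹ * (s ^ (a-1) * I) - (cβ/(2*α) * (d:ℝ)⁻¹ * s ^ (a-1)) * G
      = (cβ/(2*α) * (d:ℝ)⁻¹ * s ^ (a-1)) * (I - G) by ring]
  rw [abs_mul, abs_of_nonneg hCoef]
  calc (cβ/(2*α) * (d:ℝ)⁻¹ * s ^ (a-1)) * |I - G|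
      ≤ (cβ/(2*α) * (d:ℝ)⁻¹ * s ^ (a-1)) * (ε * G) :=
        mul_le_mul_of_nonneg_left hIG hCoef
    _ = ε * ((cβ/(2*α) * (d:ℝ)⁻¹ * s ^ (a-1)) * G) := by ring
end

section
/- Let α > 1/2. For real f ≥ 1 and d > 0 define P̃(f, d) = max{ (f/d)^{−2 + 1/(2α)}, (f/d)^{−1 + 1/(2α)}·d^{−1}, d^{−2α} }. Then for each f ≥ 1 the function d ↦ P̃(f, d) attains its minimum over d ∈ (0, ∞) at the unique point d* = f^{1/2}, and the minimum value equals f^{(1 − 4α)/(4α)}. -/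
/-- **Phase III compute-optimal curve** (`2α > 1`). The approximate loss
`P̃(f,d) = max{(f/d)^{−2+1/(2α)}, (f/d)^{−1+1/(2α)} d^{−1}, d^{−2α}}` is, for each flop
budget `f ≥ 1`, uniquely minimized over `d ∈ (0,∞)` at `d* = f^{1/2}`, with minimum value
`f^{(1−4α)/(4α)}`. -/
theorem phase_III_compute_optimal (α : ℝ) (hα : 1/2 < α) (f : ℝ) (hf : 1 ≤ f) :
    let P : ℝ → ℝ := fun d =>
      max (max ((f/d) ^ (-2 + 1/(2*α))) ((f/d) ^ (-1 + 1/(2*α)) * d ^ (-(1:ℝ))))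
        (d ^ (-(2*α)))
    let dstar : ℝ := f ^ ((1:ℝ)/2)
    (∀ d : ℝ, 0 < d → d ≠ dstar → P dstar < P d) ∧
      P dstar = f ^ ((1 - 4*α)/(4*α)) := by
  intro P dstar
  have hf0 : (0:ℝ) < f := lt_of_lt_of_le one_pos hf
  have hα0 : (0:ℝ) < α := lt_trans (by norm_num) hα
  have h2α : (0:ℝ) < 2*α := by linarith
  have hds0 : 0 < dstar := Real.rpow_pos_of_pos hf0 _
  set e1 : ℝ := -2 + 1/(2*α) with he1
  set e2 : ℝ := -1 + 1/(2*α) with he2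
  have hinv : 1/(2*α) < 1 := by rw [div_lt_one h2α]; linarith
  have hinv0 : (0:ℝ) < 1/(2*α) := by positivity
  have he1neg : 0 < -e1 := by rw [he1]; linarith
  have he2p : 0 < e2 + 1 := by rw [he2]; linarith
  set v : ℝ := f ^ ((1 - 4*α)/(4*α)) with hv
  have hA : ∀ d : ℝ, 0 < d → (f/d) ^ e1 = f ^ e1 * d ^ (-e1) := by
    intro d hd
    rw [Real.div_rpow hf0.le hd.le, Real.rpow_neg hd.le, div_eq_mul_inv]
  have hB : ∀ d : ℝ, 0 < d → (f/d) ^ e2 * d ^ (-(1:ℝ)) = f ^ e2 * d ^ (-(e2+1)) := by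
    intro d hd
    have hsplit : d ^ (-(e2+1)) = d ^ (-e2) * d ^ (-(1:ℝ)) := by
      rw [← Real.rpow_add hd]; congr 1; ring
    rw [Real.div_rpow hf0.le hd.le, hsplit, Real.rpow_neg hd.le e2, div_eq_mul_inv]
    ring
  have hfd : f / dstar = f ^ ((1:ℝ)/2) := by
    rw [show dstar = f ^ ((1:ℝ)/2) from rfl, div_eq_iff (ne_of_gt hds0),
      ← Real.rpow_add hf0]
    norm_num
  have hαne : α ≠ 0 := ne_of_gt hα0
  have hAval : (f/dstar) ^ e1 = v := by
    rw [hfd, ← Real.rpow_mul hf0.le, hv]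
    congr 1
    rw [he1]; field_simp; ring
  have hBval : (f/dstar) ^ e2 * dstar ^ (-(1:ℝ)) = v := by
    rw [hfd, ← Real.rpow_mul hf0.le,
      show dstar = f ^ ((1:ℝ)/2) from rfl, ← Real.rpow_mul hf0.le,
      ← Real.rpow_add hf0, hv]
    congr 1
    rw [he2]; field_simp; ring
  have hCval : dstar ^ (-(2*α)) ≤ v := by
    rw [show dstar = f ^ ((1:ℝ)/2) from rfl, ← Real.rpow_mul hf0.le, hv]
    apply Real.rpow_le_rpow_of_exponent_le hf
    rw [le_div_iff₀ (by positivity : (0:ℝ) < 4*α)]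
    nlinarith [sq_nonneg (2*α - 1)]
  have hPds : P dstar = v := by
    show max (max ((f/dstar) ^ e1) ((f/dstar) ^ e2 * dstar ^ (-(1:ℝ)))) (dstar ^ (-(2*α))) = v
    rw [hAval, hBval, max_self, max_eq_left hCval]
  refine ⟨?_, hPds⟩
  intro d hd hne
  rw [hPds]
  rcases lt_or_gt_of_ne hne with hlt | hgt
  · -- d < dstar : B term grows
    have hkey : v < (f/d) ^ e2 * d ^ (-(1:ℝ)) := by
      rw [hB d hd, ← hBval, hB dstar hds0]
      apply mul_lt_mul_of_pos_left _ (Real.rpow_pos_of_pos hf0 e2)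
      rw [Real.rpow_neg hd.le, Real.rpow_neg hds0.le]
      exact inv_strictAnti₀ (Real.rpow_pos_of_pos hd _)
        (Real.rpow_lt_rpow hd.le hlt he2p)
    calc v < (f/d) ^ e2 * d ^ (-(1:ℝ)) := hkey
      _ ≤ P d := le_trans (le_max_right _ _) (le_max_left _ _)
  · -- dstar < d : A term grows
    have hkey : v < (f/d) ^ e1 := by
      rw [hA d hd, ← hAval, hA dstar hds0]
      exact mul_lt_mul_of_pos_left
        (Real.rpow_lt_rpow hds0.le hgt he1neg) (Real.rpow_pos_of_pos hf0 e1)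
    calc v < (f/d) ^ e1 := hkey
      _ ≤ P d := le_trans (le_max_left _ _) (le_max_left _ _)
end
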